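/- There exists a subset A of ℤ^d which is an additive IP* set (meets every set of finite sums FS((x_n)) of an infinite sequence of nonzero elements) but such that A \ {0} is not multiplicatively syndetic with respect to any proper multiplication on ℤ^d. -/

import Mathlib

/-- A proper multiplication on ℤ^d: a biadditive associative operation making
(ℤ^d, +, ∗) a ring without zero divisors. -/
structure ProperMult (d : ℕ) where
  mul : (Fin d → ℤ) → (Fin d → ℤ) → (Fin d → ℤ)
  add_left : ∀ x y z, mul (x + y) z = mul x z + mul y z
  add_right : ∀ x y z, mul x (y + z) = mul x y + mul x z
  assoc : ∀ x y z, mul (mul x y) z = mul x (mul y z)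
  no_zero_divisors : ∀ x y, mul x y = 0 → x = 0 ∨ y = 0

/-- B is multiplicatively (right) syndetic with respect to P in (ℤ^d\{0}, ∗). -/
def SyndM {d : ℕ} (P : ProperMult d) (B : Set (Fin d → ℤ)) : Prop :=
  ∃ F : Finset (Fin d → ℤ), (∀ s ∈ F, s ≠ 0) ∧
    ∀ x : Fin d → ℤ, x ≠ 0 → ∃ s ∈ F, P.mul s x ∈ B

/-!
Enumerate the countably many pairs `(P, F)` of a proper multiplication and a finite set of
multipliers, and choose `x_n` recursively so that the block `B_n = {s ∗ x_n | s ∈ F_n, s ≠ 0}` lies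
far beyond the earlier blocks: its elements are more than twice as long as any earlier element, and
its distinct elements are farther apart than any earlier element is long. Scaling does this, since
`‖s ∗ (N • x)‖ = N ‖s ∗ x‖ ≥ N` for nonzero `s` and `x`. The union `D` of the blocks contains
`(F_n \ {0}) ∗ x_n`, so for its complement `A` the set `A \ {0}` is not syndetic for any `P`.

Comparing norms, `u + v ∉ D` whenever `u` and `v` lie in different blocks. For a sequence `x` whose
finite sums all lie in `D`, the tail sums `x 1 + ⋯ + x n` are pairwise distinct (`0 ∉ D`), so
infinitely many of them lie in blocks later than the one of `x 0`, and adding `x 0` to one of them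
leaves `D`. Hence `A` is IP*.
-/

open Finset

theorem exists_mem_of_infinite_subset_iUnion {E : Type*} {B : ℕ → Finset E} {S : Set E}
    (hS : S.Infinite) (hSB : S ⊆ ⋃ n, (B n : Set E)) (a : ℕ) : ∃ y ∈ S, ∃ b, a < b ∧ y ∈ B b := by
  classical
  obtain ⟨y, hyS, hy⟩ := hS.exists_notMem_finset ((range (a + 1)).biUnion B)
  obtain ⟨b, hb⟩ := Set.mem_iUnion.1 (hSB hyS)
  refine ⟨y, hyS, b, ?_, hb⟩
  by_contra! hba
  exact hy (mem_biUnion.2 ⟨b, mem_range.2 (by omega), hb⟩)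

section SparseBlocks

variable {E : Type*} [SeminormedAddCommGroup E]

def IsNormSeparated (R : ℝ) (s : Finset E) : Prop :=
  ∀ z ∈ s, R < ‖z‖ ∧ ∀ z' ∈ s, z ≠ z' → R < ‖z - z'‖

structure IsSparseBlocks (B : ℕ → Finset E) : Prop where
  zero_notMem : ∀ n, (0 : E) ∉ B n
  two_mul_norm_lt : ∀ ⦃m n⦄, m < n → ∀ y ∈ B m, ∀ z ∈ B n, 2 * ‖y‖ < ‖z‖
  norm_lt_norm_sub : ∀ ⦃m n⦄, m < n → ∀ y ∈ B m, ∀ z ∈ B n, ∀ z' ∈ B n, z ≠ z' →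
    ‖y‖ < ‖z - z'‖

theorem exists_isSparseBlocks_nat (p : ℕ → Finset E → Prop)
    (h : ∀ n (R : ℝ), ∃ s, IsNormSeparated R s ∧ p n s) :
    ∃ B : ℕ → Finset E, IsSparseBlocks B ∧ ∀ n, p n (B n) := by
  choose f hf_sep hf_p using h
  -- `R n` bounds the norms of all elements of the blocks `f m (2 * R m)` with `m < n`.
  let R : ℕ → ℝ := fun n => Nat.rec 0 (fun k r => r + ∑ z ∈ f k (2 * r), ‖z‖) n
  have hR_succ : ∀ n, R (n + 1) = R n + ∑ z ∈ f n (2 * R n), ‖z‖ := fun _ => rfl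
  have hR_mono : Monotone R := monotone_nat_of_le_succ fun n => by
    rw [hR_succ]
    exact le_add_of_nonneg_right (sum_nonneg fun _ _ => norm_nonneg _)
  have hR_nonneg : ∀ n, 0 ≤ R n := fun n => hR_mono (Nat.zero_le n)
  have hR_bound : ∀ ⦃m n⦄, m < n → ∀ y ∈ f m (2 * R m), ‖y‖ ≤ R n := fun m n hmn y hy =>
    calc ‖y‖ ≤ ∑ z ∈ f m (2 * R m), ‖z‖ := single_le_sum (f := (‖·‖)) (fun _ _ => norm_nonneg _) hy
      _ ≤ R (m + 1) := by rw [hR_succ]; linarith [hR_nonneg m]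
      _ ≤ R n := hR_mono hmn
  refine ⟨fun n => f n (2 * R n), ⟨fun n h0 => ?_, fun m n hmn y hy z hz => ?_,
    fun m n hmn y hy z hz z' hz' hzz' => ?_⟩, fun n => hf_p n _⟩
  · have := (hf_sep n _ 0 h0).1
    rw [norm_zero] at this
    linarith [hR_nonneg n]
  · linarith [hR_bound hmn y hy, (hf_sep n _ z hz).1]
  · linarith [hR_bound hmn y hy, (hf_sep n _ z hz).2 z' hz' hzz', hR_nonneg n]

theorem exists_isSparseBlocks {ι : Type*} [Countable ι] (p : ι → Finset E → Prop)
    (h : ∀ i (R : ℝ), ∃ s, IsNormSeparated R s ∧ p i s) :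
    ∃ B : ℕ → Finset E, IsSparseBlocks B ∧ ∀ i, ∃ n, p i (B n) := by
  obtain ⟨g, hg⟩ := exists_injective_nat ι
  obtain ⟨B, hB, hBp⟩ := exists_isSparseBlocks_nat (fun n s => ∀ i, g i = n → p i s) fun n R => by
    by_cases hn : ∃ i, g i = n
    · obtain ⟨i, rfl⟩ := hn
      obtain ⟨s, hs_sep, hs_p⟩ := h i R
      exact ⟨s, hs_sep, fun j hj => hg hj ▸ hs_p⟩
    · exact ⟨∅, by simp [IsNormSeparated], fun i hi => (hn ⟨i, hi⟩).elim⟩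
  exact ⟨B, hB, fun i => ⟨g i, hBp (g i) i rfl⟩⟩

theorem IsSparseBlocks.add_ne {B : ℕ → Finset E} (hB : IsSparseBlocks B) {a b c : ℕ} {u v w : E}
    (hu : u ∈ B a) (hv : v ∈ B b) (hw : w ∈ B c) (hab : a < b) : u + v ≠ w := by
  intro huvw
  rcases lt_trichotomy b c with hbc | rfl | hcb
  · have hw_u := hB.two_mul_norm_lt (hab.trans hbc) u hu w hw
    have hw_v := hB.two_mul_norm_lt hbc v hv w hw
    have := huvw ▸ norm_add_le u v
    linarith [norm_nonneg u, norm_nonneg v]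
  · have hwv : w ≠ v := by
      rintro rfl
      exact hB.zero_notMem a (by rwa [add_eq_right.1 huvw] at hu)
    have := hB.norm_lt_norm_sub hab u hu w hw v hv hwv
    rw [← huvw, add_sub_cancel_right] at this
    exact this.false
  · have hv_u := hB.two_mul_norm_lt hab u hu v hv
    have hv_w := hB.two_mul_norm_lt hcb w hw v hv
    have : ‖v‖ ≤ ‖w‖ + ‖u‖ :=
      calc ‖v‖ = ‖w - u‖ := by rw [← huvw, add_sub_cancel_left]
        _ ≤ ‖w‖ + ‖u‖ := norm_sub_le w u
    linarith [norm_nonneg u, norm_nonneg w]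

theorem IsSparseBlocks.exists_sum_notMem {B : ℕ → Finset E} (hB : IsSparseBlocks B)
    (x : ℕ → E) : ∃ I : Finset ℕ, I.Nonempty ∧ ∑ i ∈ I, x i ∉ ⋃ n, (B n : Set E) := by
  by_contra! hD
  have hblock : ∀ I : Finset ℕ, I.Nonempty → ∃ n, ∑ i ∈ I, x i ∈ B n := fun I hI => by
    simpa using hD I hI
  set T : ℕ → E := fun n => ∑ i ∈ Ico 1 (n + 2), x i
  have hT : Function.Injective T := Function.Injective.of_lt_imp_ne fun m n hmn hTmn => by
    obtain ⟨k, hk⟩ := hblock (Ico (m + 2) (n + 2)) (nonempty_Ico.2 (by omega))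
    have : T m + ∑ i ∈ Ico (m + 2) (n + 2), x i = T n := sum_Ico_consecutive _ (by omega) (by omega)
    rw [hTmn, add_eq_left] at this
    exact hB.zero_notMem k (this ▸ hk)
  obtain ⟨a, ha⟩ := hblock {0} (singleton_nonempty 0)
  obtain ⟨_, ⟨n, rfl⟩, b, hab, hb⟩ := exists_mem_of_infinite_subset_iUnion
    (Set.infinite_range_of_injective hT)
    (Set.range_subset_iff.2 fun n => hD _ (nonempty_Ico.2 (by omega))) a
  obtain ⟨c, hc⟩ := hblock (Ico 0 (n + 2)) (nonempty_Ico.2 (by omega))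
  rw [sum_eq_sum_Ico_succ_bot (by omega)] at hc
  exact hB.add_ne (by simpa using ha) hb hc hab rfl

end SparseBlocks

lemma one_le_norm_of_ne_zero {ι : Type*} [Fintype ι] {v : ι → ℤ} (hv : v ≠ 0) : 1 ≤ ‖v‖ := by
  obtain ⟨i, hi⟩ := Function.ne_iff.1 hv
  calc (1 : ℝ) ≤ |(v i : ℝ)| := by exact_mod_cast Int.one_le_abs hi
    _ = ‖v i‖ := (Int.norm_eq_abs _).symm
    _ ≤ ‖v‖ := norm_le_pi_norm v i

namespace ProperMult

variable {d : ℕ}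

def mulHom (P : ProperMult d) : (Fin d → ℤ) →+ (Fin d → ℤ) →+ (Fin d → ℤ) :=
  AddMonoidHom.mk' (fun x => AddMonoidHom.mk' (P.mul x) (P.add_right x))
    fun x y => AddMonoidHom.ext (P.add_left x y)

@[simp]
lemma mulHom_apply (P : ProperMult d) (x y : Fin d → ℤ) : P.mulHom x y = P.mul x y := rfl

lemma mulHom_injective : Function.Injective (mulHom : ProperMult d → _) := by
  rintro ⟨mul, _, _, _, _⟩ ⟨mul', _, _, _, _⟩ h
  congr
  funext x y
  exact DFunLike.congr_fun (DFunLike.congr_fun h x) y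

instance : Countable (ProperMult d) := by
  refine Function.Injective.countable
    (f := fun P : ProperMult d => fun i j : Fin d => P.mul (Pi.single i 1) (Pi.single j 1)) ?_
  intro P Q h
  apply mulHom_injective
  ext i j k
  exact congrFun (congrFun (congrFun h i) j) k

lemma mul_ne_zero (P : ProperMult d) {x y : Fin d → ℤ} (hx : x ≠ 0) (hy : y ≠ 0) :
    P.mul x y ≠ 0 :=
  fun h => (P.no_zero_divisors x y h).elim hx hy

lemma mul_sub_mul (P : ProperMult d) (x y z : Fin d → ℤ) :
    P.mul x z - P.mul y z = P.mul (x - y) z := by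
  simp only [← mulHom_apply, map_sub, AddMonoidHom.sub_apply]

lemma exists_forall_lt_norm_mul (hd : 0 < d) (P : ProperMult d) (R : ℝ) :
    ∃ x ≠ 0, ∀ t ≠ 0, R < ‖P.mul t x‖ := by
  have : Nonempty (Fin d) := ⟨⟨0, hd⟩⟩
  obtain ⟨o, ho⟩ := exists_ne (0 : Fin d → ℤ)
  set N : ℕ := ⌈R⌉₊ + 1 with hN
  refine ⟨(N : ℤ) • o, smul_ne_zero (by omega) ho, fun t ht => ?_⟩
  calc R < N := by push_cast [hN]; linarith [Nat.le_ceil R]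
    _ ≤ N * ‖P.mul t o‖ :=
      le_mul_of_one_le_right (Nat.cast_nonneg N) (one_le_norm_of_ne_zero (P.mul_ne_zero ht ho))
    _ = ‖P.mul t ((N : ℤ) • o)‖ := by
      rw [← mulHom_apply P t ((N : ℤ) • o), map_zsmul, norm_smul, Int.norm_natCast, mulHom_apply]

lemma exists_isNormSeparated_mul_mem (hd : 0 < d) (P : ProperMult d) (F : Finset (Fin d → ℤ))
    (R : ℝ) : ∃ s, IsNormSeparated R s ∧ ∃ x ≠ 0, ∀ t ∈ F, t ≠ 0 → P.mul t x ∈ s := by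
  classical
  obtain ⟨x, hx, hxR⟩ := P.exists_forall_lt_norm_mul hd R
  refine ⟨{t ∈ F | t ≠ 0}.image (P.mul · x), ?_, x, hx,
    fun t ht ht0 => mem_image_of_mem _ (mem_filter.2 ⟨ht, ht0⟩)⟩
  simp only [IsNormSeparated, forall_mem_image, mem_filter]
  rintro t ⟨-, ht⟩
  refine ⟨hxR t ht, fun t' _ htt' => ?_⟩
  rw [P.mul_sub_mul]
  exact hxR _ (sub_ne_zero.2 fun h => htt' (h ▸ rfl))

end ProperMult

/-- There is an additive IP* subset A of ℤ^d (A meets every set of finite sums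
of a sequence of nonzero vectors) such that A \ {0} is not multiplicatively
syndetic with respect to any proper multiplication on ℤ^d. -/
theorem exists_addIPstar_not_mult_syndetic {d : ℕ} (hd : 0 < d) :
    ∃ A : Set (Fin d → ℤ),
      (∀ x : ℕ → (Fin d → ℤ), (∀ n, x n ≠ 0) →
        ∃ I : Finset ℕ, I.Nonempty ∧ (∑ i ∈ I, x i) ∈ A) ∧
      ∀ P : ProperMult d, ¬ SyndM P (A \ {0}) := by
  obtain ⟨B, hB, hBmul⟩ := exists_isSparseBlocks
    (fun (PF : ProperMult d × Finset (Fin d → ℤ)) s =>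
      ∃ x ≠ 0, ∀ t ∈ PF.2, t ≠ 0 → PF.1.mul t x ∈ s)
    fun PF R => PF.1.exists_isNormSeparated_mul_mem hd PF.2 R
  refine ⟨(⋃ n, (B n : Set (Fin d → ℤ)))ᶜ, fun x _ => hB.exists_sum_notMem x, ?_⟩
  rintro P ⟨F, hF, hcov⟩
  obtain ⟨n, x, hx, hxB⟩ := hBmul (P, F)
  obtain ⟨t, ht, htA, -⟩ := hcov x hx
  exact htA (Set.mem_iUnion.2 ⟨n, hxB t ht (hF t ht)⟩)
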